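/- Let λ > 0, ε ∈ [0,1], β ≥ 0, Δ_IN > 0, Δ_OUT > 0 be fixed real numbers, with Γ = 1 + ε(β-1), Δ_eff = (1-ε)Δ_IN + εΔ_OUT, Λ = 1 + Δ_eff + ε(β²-1). For α > 0 let m(α) = 2αΓ/(α + λ + t(α) + 1) and q(α) = 4α[αΓ²(p+t(α)-3) + Λ(p+t(α)+1)] / [(p+t(α)+1)(p² - 2c + t(α)² + 2t(α)(p+1) + 1)], where p = α + λ, c = α - λ, t(α) = √((p-1)² + 4λ). Define the excess generalisation error E(α) = 1 + ε(β²-1) + q(α) - 2m(α)Γ - ε(1-ε)(1-β)². Then α·E(α) tends to Δ_eff + ε(1-ε)(1-β)² as α → ∞. In particular E(α) → 0 at rate 1/α for every fixed λ > 0, i.e. ridge regression is consistent for the generalisation error with the Bayes-optimal rate. -/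

import Mathlib

/-!
With `T = √((α + λ - 1)² + 4λ)` and `S = α + λ + 1 + T`, the relation `T² = (α + λ + 1)² - 4α`
collapses the denominator of `q` to `2TS`, and then
`α E(α) = (2α² / TS) (Λ + Γ²(λ+1)²/α - 4Γ²(λ+1)/S) - Γ² (2α/S)²`
(the constant part of `E` being `Γ²`). Since `T ~ α` and `S ~ 2α`, this tends to
`Λ - Γ² = Δ_eff + ε(1-ε)(1-β)²`.
-/

open Filter Topology

theorem tendsto_sqrt_sq_add_div_atTop (b c : ℝ) :
    Tendsto (fun a : ℝ => √((a + b) ^ 2 + c) / a) atTop (𝓝 1) := by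
  have hinv : Tendsto (fun a : ℝ => a⁻¹) atTop (𝓝 0) := tendsto_inv_atTop_zero
  have hinner : Tendsto (fun a : ℝ => (1 + b * a⁻¹) ^ 2 + c * a⁻¹ ^ 2) atTop (𝓝 1) := by
    simpa using (((tendsto_const_nhds (x := (1 : ℝ))).add (hinv.const_mul b)).pow 2).add
      ((hinv.pow 2).const_mul c)
  refine (Real.sqrt_one ▸ (Real.continuous_sqrt.tendsto 1).comp hinner).congr' ?_
  filter_upwards [eventually_gt_atTop 0] with a ha
  have hscale : (1 + b * a⁻¹) ^ 2 + c * a⁻¹ ^ 2 = ((a + b) ^ 2 + c) / a ^ 2 := by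
    field_simp
  rw [Function.comp_apply, hscale, Real.sqrt_div' _ (sq_nonneg a), Real.sqrt_sq ha.le]

theorem tendsto_zero_of_tendsto_id_mul {f : ℝ → ℝ} {L : ℝ}
    (h : Tendsto (fun a => a * f a) atTop (𝓝 L)) : Tendsto f atTop (𝓝 0) := by
  refine (mul_zero L ▸ h.mul tendsto_inv_atTop_zero).congr' ?_
  filter_upwards [eventually_ne_atTop 0] with a ha
  field_simp

theorem ridge_mul_excess_eq {a lam T Γ Λ : ℝ} (ha : a ≠ 0) (hT : T ≠ 0)
    (hS : a + lam + T + 1 ≠ 0) (hT2 : T ^ 2 = (a + lam - 1) ^ 2 + 4 * lam) :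
    a * (Γ ^ 2 + 4 * a * (a * Γ ^ 2 * (a + lam + T - 3) + Λ * (a + lam + T + 1)) /
        ((a + lam + T + 1) *
          ((a + lam) ^ 2 - 2 * (a - lam) + T ^ 2 + 2 * T * (a + lam + 1) + 1))
      - 2 * (2 * a * Γ / (a + lam + T + 1)) * Γ)
    = 2 * a ^ 2 / (T * (a + (lam + 1) + T)) *
        (Λ + Γ ^ 2 * (lam + 1) ^ 2 / a - 4 * Γ ^ 2 * (lam + 1) / (a + (lam + 1) + T))
      - Γ ^ 2 * (2 * a / (a + (lam + 1) + T)) ^ 2 := by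
  have hden : (a + lam) ^ 2 - 2 * (a - lam) + T ^ 2 + 2 * T * (a + lam + 1) + 1
      = 2 * T * (a + lam + T + 1) := by linear_combination -hT2
  rw [hden, show a + (lam + 1) + T = a + lam + T + 1 by ring]
  field_simp
  linear_combination Γ ^ 2 * (2 * T + 4 - 4 * a + 4 * lam) * hT2

theorem tendsto_ridge_mul_excess {T : ℝ → ℝ} (Γ Λ c : ℝ)
    (hT : Tendsto (fun a => T a / a) atTop (𝓝 1)) :
    Tendsto (fun a => 2 * a ^ 2 / (T a * (a + c + T a)) *
        (Λ + Γ ^ 2 * c ^ 2 / a - 4 * Γ ^ 2 * c / (a + c + T a))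
      - Γ ^ 2 * (2 * a / (a + c + T a)) ^ 2) atTop (𝓝 (Λ - Γ ^ 2)) := by
  have hinv : Tendsto (fun a : ℝ => a⁻¹) atTop (𝓝 0) := tendsto_inv_atTop_zero
  have hS : Tendsto (fun a => (a + c + T a) / a) atTop (𝓝 2) := by
    have h := ((tendsto_const_nhds (x := (1 : ℝ))).add (hinv.const_mul c)).add hT
    norm_num at h
    refine h.congr' ?_
    filter_upwards [eventually_ne_atTop 0] with a ha
    field_simp
  have hlim : Tendsto (fun a => 2 / (T a / a * ((a + c + T a) / a)) *
        (Λ + Γ ^ 2 * c ^ 2 * a⁻¹ - 4 * Γ ^ 2 * c * a⁻¹ / ((a + c + T a) / a))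
      - Γ ^ 2 * (2 / ((a + c + T a) / a)) ^ 2) atTop
      (𝓝 (2 / (1 * 2) * (Λ + Γ ^ 2 * c ^ 2 * 0 - 4 * Γ ^ 2 * c * 0 / 2) - Γ ^ 2 * (2 / 2) ^ 2)) :=
    ((tendsto_const_nhds.div (hT.mul hS) (by norm_num)).mul
      ((tendsto_const_nhds.add (hinv.const_mul _)).sub
        ((hinv.const_mul _).div hS (by norm_num)))).sub
      ((tendsto_const_nhds.div hS (by norm_num)).pow 2 |>.const_mul _)
  norm_num at hlim
  refine hlim.congr' ?_
  filter_upwards [eventually_gt_atTop 0, hT.eventually (lt_mem_nhds one_pos),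
    hS.eventually (lt_mem_nhds two_pos)] with a ha hTa hSa
  have hTa : 0 < T a := by simpa [ha] using hTa
  have hSa : 0 < a + c + T a := by simpa [ha] using hSa
  field_simp

theorem ridge_generalisation_error_consistent_with_BO_rate_general
    (lam ε β : ℝ)
    (Γ Δeff Λ : ℝ)
    (hΓ : Γ = 1 + ε * (β - 1))
    (hΛ : Λ = 1 + Δeff + ε * (β ^ 2 - 1))
    (t m q E : ℝ → ℝ)
    (ht : ∀ α : ℝ, t α = Real.sqrt ((α + lam - 1) ^ 2 + 4 * lam))
    (hm : ∀ α : ℝ, m α = 2 * α * Γ / (α + lam + t α + 1))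
    (hq : ∀ α : ℝ, q α =
      4 * α * (α * Γ ^ 2 * (α + lam + t α - 3) + Λ * (α + lam + t α + 1)) /
        ((α + lam + t α + 1) *
          ((α + lam) ^ 2 - 2 * (α - lam) + (t α) ^ 2 + 2 * t α * (α + lam + 1) + 1)))
    (hE : ∀ α : ℝ, E α =
      1 + ε * (β ^ 2 - 1) + q α - 2 * m α * Γ - ε * (1 - ε) * (1 - β) ^ 2) :
    Tendsto (fun α : ℝ => α * E α) atTop (nhds (Δeff + ε * (1 - ε) * (1 - β) ^ 2)) ∧
    Tendsto E atTop (nhds 0) := by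
  have ht_div : Tendsto (fun α => t α / α) atTop (𝓝 1) := by
    simpa only [ht, add_sub_assoc] using tendsto_sqrt_sq_add_div_atTop (lam - 1) (4 * lam)
  have hlim := tendsto_ridge_mul_excess Γ Λ (lam + 1) ht_div
  have hval : Λ - Γ ^ 2 = Δeff + ε * (1 - ε) * (1 - β) ^ 2 := by rw [hΛ, hΓ]; ring
  have hmain : Tendsto (fun α => α * E α) atTop (𝓝 (Δeff + ε * (1 - ε) * (1 - β) ^ 2)) := by
    refine hval ▸ hlim.congr' ?_
    filter_upwards [eventually_gt_atTop 0, eventually_gt_atTop (-(lam + 1)),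
      ht_div.eventually (lt_mem_nhds one_pos)] with α hα hαS htα
    have htα : 0 < t α := by simpa [hα] using htα
    have ht_sq : t α ^ 2 = (α + lam - 1) ^ 2 + 4 * lam := by
      rw [ht α] at htα ⊢
      exact Real.sq_sqrt (Real.sqrt_pos.mp htα).le
    have hΓsq : 1 + ε * (β ^ 2 - 1) - ε * (1 - ε) * (1 - β) ^ 2 = Γ ^ 2 := by rw [hΓ]; ring
    have hS : 0 < α + lam + t α + 1 := by linarith
    rw [hE, hq, hm, ← ridge_mul_excess_eq hα.ne' htα.ne' hS.ne' ht_sq, ← hΓsq]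
    ring
  exact ⟨hmain, tendsto_zero_of_tendsto_id_mul hmain⟩

/-- The excess generalisation error of ridge regression on the double-Gaussian
outlier model satisfies α·E(α) → Δ_eff + ε(1-ε)(1-β)² as α → ∞; in particular
E(α) → 0 at rate 1/α, i.e. ridge regression is consistent for the
generalisation error with the Bayes-optimal rate. -/
theorem ridge_generalisation_error_consistent_with_BO_rate
    (lam ε β ΔIN ΔOUT : ℝ) (hlam : 0 < lam) (hε : ε ∈ Set.Icc (0 : ℝ) 1) (hβ : 0 ≤ β)
    (hIN : 0 < ΔIN) (hOUT : 0 < ΔOUT)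
    (Γ Δeff Λ : ℝ)
    (hΓ : Γ = 1 + ε * (β - 1))
    (hΔeff : Δeff = (1 - ε) * ΔIN + ε * ΔOUT)
    (hΛ : Λ = 1 + Δeff + ε * (β ^ 2 - 1))
    (t m q E : ℝ → ℝ)
    (ht : ∀ α : ℝ, t α = Real.sqrt ((α + lam - 1) ^ 2 + 4 * lam))
    (hm : ∀ α : ℝ, m α = 2 * α * Γ / (α + lam + t α + 1))
    (hq : ∀ α : ℝ, q α =
      4 * α * (α * Γ ^ 2 * (α + lam + t α - 3) + Λ * (α + lam + t α + 1)) /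
        ((α + lam + t α + 1) *
          ((α + lam) ^ 2 - 2 * (α - lam) + (t α) ^ 2 + 2 * t α * (α + lam + 1) + 1)))
    (hE : ∀ α : ℝ, E α =
      1 + ε * (β ^ 2 - 1) + q α - 2 * m α * Γ - ε * (1 - ε) * (1 - β) ^ 2) :
    Tendsto (fun α : ℝ => α * E α) atTop (nhds (Δeff + ε * (1 - ε) * (1 - β) ^ 2)) ∧
    Tendsto E atTop (nhds 0) :=
  ridge_generalisation_error_consistent_with_BO_rate_general lam ε β Γ Δeff Λ hΓ hΛ t m q E ht hm hq
    hE
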